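/- arXiv:2511.04056 — 4 statements merged into one kernel-verified Lean document; each statement's English description precedes it below -/
import Mathlib

section
/- Let X and Y be Banach spaces and let (A_n) be a sequence of continuous linear operators from X to Y that is collectively compact. Let A : X → Y be a continuous linear operator such that A_n x → A x in Y for every x ∈ X. Then A is a compact operator. -/
open Filter Topology Bornology

theorem image_subset_closure_iUnion_image_of_tendsto {ι α β : Type*} [TopologicalSpace β]
    {l : Filter ι} [l.NeBot] {f : ι → α → β} {g : α → β}
    (hlim : ∀ x, Tendsto (fun i => f i x) l (𝓝 (g x))) (U : Set α) :
    g '' U ⊆ closure (⋃ i, f i '' U) := by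
  rintro _ ⟨x, hx, rfl⟩
  exact mem_closure_of_tendsto (hlim x)
    (Eventually.of_forall fun i => Set.mem_iUnion.2 ⟨i, x, hx, rfl⟩)

theorem stmt_8_general {X Y : Type*}
    [NormedAddCommGroup X] [NormedSpace ℝ X]
    [NormedAddCommGroup Y] [NormedSpace ℝ Y]
    (A : ℕ → X →L[ℝ] Y) (B : X →L[ℝ] Y)
    (hcc : ∀ U : Set X, IsBounded U → IsCompact (closure (⋃ n, A n '' U)))
    (hlim : ∀ x : X, Tendsto (fun n => A n x) atTop (𝓝 (B x))) :
    ∀ U : Set X, IsBounded U → IsCompact (closure (B '' U)) := fun U hU =>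
  (hcc U hU).closure_of_subset (image_subset_closure_iUnion_image_of_tendsto hlim U)

/-- the pointwise limit of a collectively compact sequence of
continuous linear operators between Banach spaces is a compact operator.
(Collective compactness: for every bounded `U ⊆ X`, the set
`{A_n u : n ∈ ℕ, u ∈ U}` has compact closure in `Y`; compactness of `A`: every
bounded set is mapped to a relatively compact set.) -/
theorem stmt_8 {X Y : Type*}
    [NormedAddCommGroup X] [NormedSpace ℝ X] [CompleteSpace X]
    [NormedAddCommGroup Y] [NormedSpace ℝ Y] [CompleteSpace Y]
    (A : ℕ → X →L[ℝ] Y) (B : X →L[ℝ] Y)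
    (hcc : ∀ U : Set X, IsBounded U → IsCompact (closure (⋃ n, A n '' U)))
    (hlim : ∀ x : X, Tendsto (fun n => A n x) atTop (𝓝 (B x))) :
    ∀ U : Set X, IsBounded U → IsCompact (closure (B '' U)) :=
  stmt_8_general A B hcc hlim
end

section
/- Let X, Y, Z be Banach spaces, let {A_i : X → Y}_{i∈I} be a collectively compact family of continuous linear operators, and let L_n, L : Y → Z be continuous linear operators such that L_n y → L y in Z for every y ∈ Y. Then ‖(L_n − L) ∘ A_i‖ → 0 as n → ∞, uniformly in i ∈ I; that is, for every ε > 0 there exists N such that for all n ≥ N and all i ∈ I the operator norm of (L_n − L) ∘ A_i is less than ε. -/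
open Filter Topology Bornology

/-! Banach–Steinhaus makes the pointwise convergent sequence `L n` equicontinuous, so it converges
uniformly on compact sets, in particular on `K = closure (⋃ i, A i '' closedBall 0 1)`. Every `A i`
maps the unit ball into `K`, so `‖(L n - L) ∘ A i‖ ≤ sup_{y ∈ K} ‖L n y - L y‖ → 0` uniformly in `i`. -/

theorem ContinuousLinearMap.tendstoUniformlyOn_of_tendsto {𝕜 E F : Type*}
    [NontriviallyNormedField 𝕜] [NormedAddCommGroup E] [NormedSpace 𝕜 E] [CompleteSpace E]
    [NormedAddCommGroup F] [NormedSpace 𝕜 F]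
    {T : ℕ → E →L[𝕜] F} {S : E →L[𝕜] F} (hT : ∀ x, Tendsto (fun n ↦ T n x) atTop (𝓝 (S x)))
    {K : Set E} (hK : IsCompact K) :
    TendstoUniformlyOn (fun n ↦ T n) S atTop K := by
  have hequi : Equicontinuous (fun n ↦ (T n : E → F)) :=
    (PolynormableSpace.banach_steinhaus fun x ↦ (hT x).isVonNBounded_range 𝕜).equicontinuous
  have hK_unif : Tendsto (UniformOnFun.ofFun {K} ∘ fun n ↦ (T n : E → F)) atTop
      (𝓝 (UniformOnFun.ofFun {K} S)) :=
    (EquicontinuousOn.tendsto_uniformOnFun_iff_pi' (by simpa using hK)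
      (by simpa using hequi.equicontinuousOn K) atTop S).2
      (tendsto_pi_nhds.2 fun x ↦ hT x)
  exact UniformOnFun.tendsto_iff_tendstoUniformlyOn.1 hK_unif K rfl

theorem stmt_9_general {X Y Z : Type*}
    [NormedAddCommGroup X] [NormedSpace ℝ X]
    [NormedAddCommGroup Y] [NormedSpace ℝ Y] [CompleteSpace Y]
    [NormedAddCommGroup Z] [NormedSpace ℝ Z]
    {I : Type*} (A : I → X →L[ℝ] Y)
    (hcc : ∀ U : Set X, IsBounded U → IsCompact (closure (⋃ i, A i '' U)))
    (L : ℕ → Y →L[ℝ] Z) (Llim : Y →L[ℝ] Z)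
    (hlim : ∀ y : Y, Tendsto (fun n => L n y) atTop (𝓝 (Llim y))) :
    ∀ ε > (0 : ℝ), ∃ N : ℕ, ∀ n ≥ N, ∀ i : I, ‖(L n - Llim).comp (A i)‖ < ε := by
  intro ε hε
  have hunif := ContinuousLinearMap.tendstoUniformlyOn_of_tendsto hlim
    (hcc _ (Metric.isBounded_closedBall (x := (0 : X)) (r := 1)))
  obtain ⟨N, hN⟩ := eventually_atTop.1 (Metric.tendstoUniformlyOn_iff.1 hunif (ε / 2) (half_pos hε))
  refine ⟨N, fun n hn i ↦ ?_⟩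
  have hnorm_le : ‖(L n - Llim).comp (A i)‖ ≤ ε / 2 := by
    refine ContinuousLinearMap.opNorm_le_of_unit_norm (half_pos hε).le fun u hu ↦ ?_
    have hAu : A i u ∈ closure (⋃ i, A i '' Metric.closedBall 0 1) :=
      subset_closure (Set.mem_iUnion_of_mem i (Set.mem_image_of_mem _ (by simp [hu])))
    simpa [dist_eq_norm', norm_sub_rev] using (hN n hn _ hAu).le
  linarith

/-- if `{A_i : X → Y}_{i ∈ I}` is a collectively compact family of
continuous linear operators and `L_n → L` pointwise (as operators `Y → Z`),
then `‖(L_n - L) ∘ A_i‖ → 0` uniformly in `i ∈ I`. -/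
theorem stmt_9 {X Y Z : Type*}
    [NormedAddCommGroup X] [NormedSpace ℝ X] [CompleteSpace X]
    [NormedAddCommGroup Y] [NormedSpace ℝ Y] [CompleteSpace Y]
    [NormedAddCommGroup Z] [NormedSpace ℝ Z] [CompleteSpace Z]
    {I : Type*} (A : I → X →L[ℝ] Y)
    (hcc : ∀ U : Set X, IsBounded U → IsCompact (closure (⋃ i, A i '' U)))
    (L : ℕ → Y →L[ℝ] Z) (Llim : Y →L[ℝ] Z)
    (hlim : ∀ y : Y, Tendsto (fun n => L n y) atTop (𝓝 (Llim y))) :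
    ∀ ε > (0 : ℝ), ∃ N : ℕ, ∀ n ≥ N, ∀ i : I, ‖(L n - Llim).comp (A i)‖ < ε :=
  stmt_9_general A hcc L Llim hlim
end

section
/- Let X be a Banach space, let A : X → X be a compact continuous linear operator such that I − A is bijective, and let B : X → X be its continuous inverse (so B ∘ (I − A) = (I − A) ∘ B = I). Let (A_n) be a collectively compact sequence of continuous linear operators on X with A_n x → A x for every x ∈ X. Then for every n with ‖B ∘ (A_n − A) ∘ A_n‖ < 1, the operator I − A_n is bijective, its inverse is a continuous linear operator, and ‖(I − A_n)^{-1}‖ ≤ (1 + ‖B ∘ A_n‖)/(1 − ‖B ∘ (A_n − A) ∘ A_n‖). -/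
open Filter Topology Bornology

/-!
From `B (1 - A) = 1` one gets the identity `(1 + B Aₙ)(1 - Aₙ) = 1 - B (Aₙ - A) Aₙ`. When the
right side is a Neumann-series unit, `(1 - B (Aₙ - A) Aₙ)⁻¹ (1 + B Aₙ)` is a left inverse of
`1 - Aₙ` with the stated norm bound. So `1 - Aₙ` is injective, and since each `Aₙ` of a
collectively compact family is compact, the Fredholm alternative makes `1 - Aₙ` invertible.
-/
lemma IsCompactOperator.of_isCompact_closure_iUnion_image {𝕜 E F ι : Type*}
    [NontriviallyNormedField 𝕜] [NormedAddCommGroup E] [NormedSpace 𝕜 E]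
    [NormedAddCommGroup F] [NormedSpace 𝕜 F] (K : ι → E →L[𝕜] F)
    (hK : ∀ U : Set E, IsBounded U → IsCompact (closure (⋃ i, K i '' U))) (i : ι) :
    IsCompactOperator (K i) := by
  refine (isCompactOperator_iff_isCompact_closure_image_closedBall (K i : E →ₗ[𝕜] F) one_pos).2 ?_
  exact (hK _ Metric.isBounded_closedBall).of_isClosed_subset isClosed_closure
    (closure_mono (Set.subset_iUnion (fun j => K j '' _) i))

lemma IsCompactOperator.isUnit_one_sub_of_injective {𝕜 E : Type*} [NontriviallyNormedField 𝕜]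
    [NormedAddCommGroup E] [NormedSpace 𝕜 E] [CompleteSpace E] {K : E →L[𝕜] E}
    (hK : IsCompactOperator K) (hinj : Function.Injective (1 - K : E →L[𝕜] E)) :
    IsUnit (1 - K) := by
  refine (hK.hasEigenvalue_or_mem_resolventSet one_ne_zero).elim (fun hev => ?_) fun hres => ?_
  · obtain ⟨x, hx⟩ := hev.exists_hasEigenvector
    refine absurd (hinj (a₂ := 0) ?_) hx.2
    simpa [sub_eq_zero, eq_comm (a := x)] using Module.End.mem_eigenspace_iff.1 hx.1
  · simpa [spectrum.mem_resolventSet_iff] using hres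

lemma one_add_mul_mul_one_sub_eq {R : Type*} [Ring R] {a b x : R} (h : b * (1 - a) = 1) :
    (1 + b * x) * (1 - x) = 1 - b * ((x - a) * x) := by
  have hba : b * a = b - 1 := by rw [mul_sub, mul_one] at h; rw [← h]; abel
  calc (1 + b * x) * (1 - x) = 1 - b * (x * x) + (b - 1) * x := by noncomm_ring
    _ = 1 - b * ((x - a) * x) := by rw [← hba]; noncomm_ring

lemma exists_mul_one_sub_eq_one_of_norm_lt_one {R : Type*} [NormedRing R]
    [HasSummableGeomSeries R] (h1 : ‖(1 : R)‖ ≤ 1) {a b x : R} (h : b * (1 - a) = 1)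
    (hx : ‖b * ((x - a) * x)‖ < 1) :
    ∃ c : R, c * (1 - x) = 1 ∧ ‖c‖ ≤ (1 + ‖b * x‖) / (1 - ‖b * ((x - a) * x)‖) := by
  set C := b * ((x - a) * x)
  refine ⟨(∑' n, C ^ n) * (1 + b * x), ?_, ?_⟩
  · rw [mul_assoc, one_add_mul_mul_one_sub_eq h, geom_series_mul_neg C hx]
  · have hgeom : ‖∑' n, C ^ n‖ ≤ (1 - ‖C‖)⁻¹ := by
      linarith [tsum_geometric_le_of_norm_lt_one C hx]
    calc ‖(∑' n, C ^ n) * (1 + b * x)‖ ≤ ‖∑' n, C ^ n‖ * ‖1 + b * x‖ := norm_mul_le _ _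
      _ ≤ (1 - ‖C‖)⁻¹ * (1 + ‖b * x‖) := by
        gcongr
        exact (norm_add_le _ _).trans (by linarith)
      _ = (1 + ‖b * x‖) / (1 - ‖C‖) := inv_mul_eq_div _ _

theorem stmt_11_general {X : Type*} [NormedAddCommGroup X] [NormedSpace ℝ X]
    [CompleteSpace X]
    (A : X →L[ℝ] X)
    (B : X →L[ℝ] X)
    (hB₁ : B.comp (1 - A) = 1)
    (An : ℕ → X →L[ℝ] X)
    (hcc : ∀ U : Set X, IsBounded U → IsCompact (closure (⋃ n, An n '' U))) :
    ∀ n : ℕ, ‖B.comp ((An n - A).comp (An n))‖ < 1 →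
      Function.Bijective ((1 - An n : X →L[ℝ] X)) ∧
      ∃ Bn : X →L[ℝ] X, Bn.comp (1 - An n) = 1 ∧ (1 - An n).comp Bn = 1 ∧
        ‖Bn‖ ≤ (1 + ‖B.comp (An n)‖) / (1 - ‖B.comp ((An n - A).comp (An n))‖) := by
  intro n hn
  obtain ⟨Bn, hleft, hnorm⟩ :=
    exists_mul_one_sub_eq_one_of_norm_lt_one ContinuousLinearMap.norm_id_le hB₁ hn
  have hinj : Function.Injective (1 - An n : X →L[ℝ] X) :=
    Function.LeftInverse.injective (g := Bn) fun x => by simpa using DFunLike.congr_fun hleft x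
  obtain ⟨u, hu⟩ :=
    (IsCompactOperator.of_isCompact_closure_iUnion_image An hcc n).isUnit_one_sub_of_injective hinj
  have hright : (1 - An n) * Bn = 1 := by
    rw [← hu] at hleft ⊢
    rw [← u.inv_eq_of_mul_eq_one_left hleft, u.mul_inv]
  exact ⟨ContinuousLinearMap.isUnit_iff_bijective.1 ⟨u, hu⟩, Bn, hleft, hright, hnorm⟩

/-- Anselone: let `A` be compact with `I - A` bijective with
continuous inverse `B`, and let `(A_n)` be collectively compact with `A_n → A`
pointwise. Then for every `n` with `‖B ∘ (A_n - A) ∘ A_n‖ < 1`, the operator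
`I - A_n` is bijective, its inverse is a continuous linear operator, and
`‖(I - A_n)⁻¹‖ ≤ (1 + ‖B ∘ A_n‖) / (1 - ‖B ∘ (A_n - A) ∘ A_n‖)`. -/
theorem stmt_11 {X : Type*} [NormedAddCommGroup X] [NormedSpace ℝ X]
    [CompleteSpace X]
    (A : X →L[ℝ] X)
    (hAcomp : ∀ U : Set X, IsBounded U → IsCompact (closure (A '' U)))
    (B : X →L[ℝ] X)
    (hB₁ : B.comp (1 - A) = 1) (hB₂ : (1 - A).comp B = 1)
    (An : ℕ → X →L[ℝ] X)
    (hcc : ∀ U : Set X, IsBounded U → IsCompact (closure (⋃ n, An n '' U)))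
    (hlim : ∀ x : X, Tendsto (fun n => An n x) atTop (𝓝 (A x))) :
    ∀ n : ℕ, ‖B.comp ((An n - A).comp (An n))‖ < 1 →
      Function.Bijective ((1 - An n : X →L[ℝ] X)) ∧
      ∃ Bn : X →L[ℝ] X, Bn.comp (1 - An n) = 1 ∧ (1 - An n).comp Bn = 1 ∧
        ‖Bn‖ ≤ (1 + ‖B.comp (An n)‖) / (1 - ‖B.comp ((An n - A).comp (An n))‖) :=
  stmt_11_general A B hB₁ An hcc
end

section
/- Let X be a Banach space, let A : X → X be a compact continuous linear operator such that I − A is bijective with continuous inverse B : X → X, and let (A_n) be a collectively compact sequence of continuous linear operators on X with A_n x → A x for every x ∈ X. Suppose n is such that ‖B ∘ (A_n − A) ∘ A_n‖ < 1, and suppose y, y_n, f, f_n ∈ X satisfy y − A y = f and y_n − A_n y_n = f_n. Then ‖y_n − y‖ ≤ ((1 + ‖B ∘ A_n‖)/(1 − ‖B ∘ (A_n − A) ∘ A_n‖)) · (‖(A_n − A) y‖ + ‖f_n − f‖). -/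
open Filter Topology Bornology

/-! With `M = B (Aₙ - A) Aₙ` and `C = B Aₙ`, the left-inverse identity `B (1 - A) = 1` gives the
operator identity `(1 + C)(1 - Aₙ) = 1 - M`. The error `e = yₙ - y` satisfies
`(1 - Aₙ) e = (fₙ - f) + (Aₙ - A) y`, hence `(1 - M) e = (1 + C)((fₙ - f) + (Aₙ - A) y)`, and
`‖M‖ < 1` turns this into the bound `‖e‖ ≤ ‖(1 - M) e‖ / (1 - ‖M‖)`. -/

theorem one_add_mul_mul_one_sub_eq_one_sub {R : Type*} [Ring R] {a b c : R}
    (hb : b * (1 - a) = 1) : (1 + b * c) * (1 - c) = 1 - b * ((c - a) * c) := by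
  have h : (1 + b * c) * (1 - c) - (1 - b * ((c - a) * c)) = (b * (1 - a) - 1) * c := by
    noncomm_ring
  rwa [hb, sub_self, zero_mul, sub_eq_zero] at h

theorem ContinuousLinearMap.norm_le_norm_sub_apply_div {𝕜 E : Type*} [NontriviallyNormedField 𝕜]
    [SeminormedAddCommGroup E] [NormedSpace 𝕜 E] {M : E →L[𝕜] E} (hM : ‖M‖ < 1) (x : E) :
    ‖x‖ ≤ ‖x - M x‖ / (1 - ‖M‖) := by
  rw [le_div_iff₀ (sub_pos.mpr hM)]
  calc ‖x‖ * (1 - ‖M‖) = ‖x‖ - ‖M‖ * ‖x‖ := by ring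
    _ ≤ ‖x‖ - ‖M x‖ := by gcongr; exact M.le_opNorm x
    _ ≤ ‖x - M x‖ := norm_sub_norm_le x (M x)

theorem ContinuousLinearMap.norm_add_apply_le {𝕜 E : Type*} [NontriviallyNormedField 𝕜]
    [SeminormedAddCommGroup E] [NormedSpace 𝕜 E] (C : E →L[𝕜] E) (x : E) :
    ‖x + C x‖ ≤ (1 + ‖C‖) * ‖x‖ :=
  calc ‖x + C x‖ ≤ ‖x‖ + ‖C x‖ := norm_add_le x (C x)
    _ ≤ ‖x‖ + ‖C‖ * ‖x‖ := by gcongr; exact C.le_opNorm x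
    _ = (1 + ‖C‖) * ‖x‖ := by ring

theorem stmt_12_general {X : Type*} [NormedAddCommGroup X] [NormedSpace ℝ X]
    (A : X →L[ℝ] X)
    (B : X →L[ℝ] X)
    (hB₁ : B.comp (1 - A) = 1)
    (An : ℕ → X →L[ℝ] X)
    (n : ℕ) (hn : ‖B.comp ((An n - A).comp (An n))‖ < 1)
    (y yn f fn : X) (hy : y - A y = f) (hyn : yn - An n yn = fn) :
    ‖yn - y‖ ≤ (1 + ‖B.comp (An n)‖) / (1 - ‖B.comp ((An n - A).comp (An n))‖) *
      (‖(An n - A) y‖ + ‖fn - f‖) := by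
  set M := B.comp ((An n - A).comp (An n))
  set C := B.comp (An n)
  set g := fn - f + (An n - A) y
  have hg : (1 - An n) (yn - y) = g := by
    simp only [g, ← hy, ← hyn, sub_apply, one_apply_eq_self, map_sub]
    abel
  have he : yn - y - M (yn - y) = g + C g := by
    have h : ((1 + C) * (1 - An n)) (yn - y) = (1 - M) (yn - y) :=
      congrArg (· (yn - y)) (one_add_mul_mul_one_sub_eq_one_sub hB₁)
    simpa only [mul_apply_eq_comp, hg, add_apply, sub_apply, one_apply_eq_self] using h.symm
  calc ‖yn - y‖ ≤ ‖g + C g‖ / (1 - ‖M‖) := he ▸ M.norm_le_norm_sub_apply_div hn _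
    _ ≤ (1 + ‖C‖) * ‖g‖ / (1 - ‖M‖) := by gcongr; exact C.norm_add_apply_le g
    _ ≤ (1 + ‖C‖) * (‖(An n - A) y‖ + ‖fn - f‖) / (1 - ‖M‖) := by
        gcongr; exact (norm_add_le _ _).trans_eq (add_comm _ _)
    _ = _ := div_mul_eq_mul_div .. |>.symm

/-- Anselone error estimate: with `A` compact, `I - A` bijective
with continuous inverse `B`, `(A_n)` collectively compact and `A_n → A`
pointwise, if `‖B ∘ (A_n - A) ∘ A_n‖ < 1` and `y - A y = f`, `y_n - A_n y_n = f_n`,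
then `‖y_n - y‖ ≤ ((1 + ‖B ∘ A_n‖) / (1 - ‖B ∘ (A_n - A) ∘ A_n‖)) ·
(‖(A_n - A) y‖ + ‖f_n - f‖)`. -/
theorem stmt_12 {X : Type*} [NormedAddCommGroup X] [NormedSpace ℝ X]
    [CompleteSpace X]
    (A : X →L[ℝ] X)
    (hAcomp : ∀ U : Set X, IsBounded U → IsCompact (closure (A '' U)))
    (B : X →L[ℝ] X)
    (hB₁ : B.comp (1 - A) = 1) (hB₂ : (1 - A).comp B = 1)
    (An : ℕ → X →L[ℝ] X)
    (hcc : ∀ U : Set X, IsBounded U → IsCompact (closure (⋃ n, An n '' U)))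
    (hlim : ∀ x : X, Tendsto (fun n => An n x) atTop (𝓝 (A x)))
    (n : ℕ) (hn : ‖B.comp ((An n - A).comp (An n))‖ < 1)
    (y yn f fn : X) (hy : y - A y = f) (hyn : yn - An n yn = fn) :
    ‖yn - y‖ ≤ (1 + ‖B.comp (An n)‖) / (1 - ‖B.comp ((An n - A).comp (An n))‖) *
      (‖(An n - A) y‖ + ‖fn - f‖) :=
  stmt_12_general A B hB₁ An n hn y yn f fn hy hyn
end
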